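/- (Lemma 1, functions with linear argument.) Let σ > 0, n ≥ 1, let f : ℝ → ℝ be measurable, and let x, w ∈ ℝⁿ with x ≠ 0. Assume the function t ↦ f(⟨t, x⟩) k_σ(w − t) is integrable on ℝⁿ, where ⟨·,·⟩ denotes the Euclidean inner product. Then ∫_{ℝⁿ} f(⟨t, x⟩) k_σ(w − t) dt = ∫_ℝ f(y) k_{σ‖x‖}(⟨w, x⟩ − y) dy; that is, the n-dimensional Gaussian smoothing of w ↦ f(⟨w, x⟩) at w equals the one-dimensional Gaussian smoothing of f with parameter σ‖x‖ evaluated at ⟨w, x⟩. -/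

import Mathlib

open MeasureTheory
open scoped RealInnerProductSpace

/-- Isotropic Gaussian kernel on `ℝⁿ`: `k_σ(x) = (√(2π) σ)^{-n} exp(−‖x‖²/(2σ²))`. -/
noncomputable def gaussKernel (σ : ℝ) {n : ℕ} (x : EuclideanSpace ℝ (Fin n)) : ℝ :=
  ((Real.sqrt (2 * Real.pi) * σ)⁻¹) ^ n * Real.exp (-‖x‖ ^ 2 / (2 * σ ^ 2))

/-- One-dimensional Gaussian kernel. -/
noncomputable def gauss1 (σ x : ℝ) : ℝ :=
  (Real.sqrt (2 * Real.pi) * σ)⁻¹ * Real.exp (-x ^ 2 / (2 * σ ^ 2))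

/-! Choose an orthonormal basis whose `i`-th vector is `x / ‖x‖`. In these coordinates `⟪t, x⟫` is
`‖x‖` times the `i`-th coordinate, and the isotropic kernel is a product of one-dimensional
kernels, so by Fubini every coordinate but the `i`-th integrates out to `1`. The remaining
one-dimensional integral is rescaled by `‖x‖`. -/

lemma integral_gauss1 {σ : ℝ} (hσ : 0 < σ) : ∫ s, gauss1 σ s = 1 := by
  have hexp : ∀ s : ℝ, -s ^ 2 / (2 * σ ^ 2) = -(2 * σ ^ 2)⁻¹ * s ^ 2 := fun s => by ring
  have hsqrt : Real.sqrt (Real.pi / (2 * σ ^ 2)⁻¹) = Real.sqrt (2 * Real.pi) * σ := by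
    rw [div_inv_eq_mul, ← mul_assoc, mul_comm Real.pi, Real.sqrt_mul (by positivity),
      Real.sqrt_sq hσ.le]
  simp only [gauss1, integral_const_mul, hexp, integral_gaussian, hsqrt]
  exact inv_mul_cancel₀ (by positivity)

lemma integral_gauss1_sub {σ : ℝ} (hσ : 0 < σ) (c : ℝ) : ∫ s, gauss1 σ (c - s) = 1 := by
  rw [integral_sub_left_eq_self (gauss1 σ), integral_gauss1 hσ]

lemma gauss1_mul_mul (σ z : ℝ) {r : ℝ} (hr : r ≠ 0) :
    gauss1 (σ * r) (r * z) = r⁻¹ * gauss1 σ z := by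
  rcases eq_or_ne σ 0 with rfl | hσ
  · simp [gauss1]
  have hexp : -(r * z) ^ 2 / (2 * (σ * r) ^ 2) = -z ^ 2 / (2 * σ ^ 2) := by field_simp
  rw [gauss1, gauss1, hexp, mul_inv, mul_inv, mul_inv]
  ring

lemma gaussKernel_eq_prod (σ : ℝ) {n : ℕ} (v : EuclideanSpace ℝ (Fin n)) :
    gaussKernel σ v = ∏ i, gauss1 σ (v i) := by
  rw [gaussKernel, EuclideanSpace.norm_eq, Real.sq_sqrt (by positivity)]
  simp only [gauss1, Finset.prod_mul_distrib, Finset.prod_const, Finset.card_univ,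
    Fintype.card_fin, ← Real.exp_sum, ← Finset.sum_div, ← Finset.sum_neg_distrib, Real.norm_eq_abs,
    sq_abs]

lemma gaussKernel_map_linearIsometryEquiv (σ : ℝ) {n : ℕ}
    (e : EuclideanSpace ℝ (Fin n) ≃ₗᵢ[ℝ] EuclideanSpace ℝ (Fin n)) (v : EuclideanSpace ℝ (Fin n)) :
    gaussKernel σ (e v) = gaussKernel σ v := by
  rw [gaussKernel, gaussKernel, e.norm_map]

lemma integral_comp_apply_mul_gaussKernel {σ : ℝ} (hσ : 0 < σ) {n : ℕ} (g : ℝ → ℝ)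
    (c : EuclideanSpace ℝ (Fin n)) (i : Fin n) :
    ∫ u : EuclideanSpace ℝ (Fin n), g (u i) * gaussKernel σ (c - u) =
      ∫ s, g s * gauss1 σ (c i - s) := by
  classical
  let h (j : Fin n) (s : ℝ) : ℝ := (if j = i then g s else 1) * gauss1 σ (c j - s)
  have hprod (u : EuclideanSpace ℝ (Fin n)) :
      g (u i) * gaussKernel σ (c - u) = ∏ j, h j (u j) := by
    rw [Finset.prod_mul_distrib, Finset.prod_ite_eq', if_pos (Finset.mem_univ i),
      gaussKernel_eq_prod]
    rfl
  calc ∫ u : EuclideanSpace ℝ (Fin n), g (u i) * gaussKernel σ (c - u)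
      = ∫ y : Fin n → ℝ, ∏ j, h j (y j) := by
        simp_rw [hprod]
        exact ((PiLp.volume_preserving_toLp (Fin n)).integral_comp
          (MeasurableEquiv.toLp 2 (Fin n → ℝ)).measurableEmbedding
          (fun u : EuclideanSpace ℝ (Fin n) => ∏ j, h j (u j))).symm
    _ = ∏ j, ∫ s, h j s := integral_fintype_prod_eq_prod h
    _ = ∫ s, g s * gauss1 σ (c i - s) := by
        rw [Finset.prod_eq_single i (fun j _ hj => by simp [h, hj, integral_gauss1_sub hσ])
          (by simp)]
        simp [h]

lemma integral_comp_inner_mul_gaussKernel {σ : ℝ} (hσ : 0 < σ) {n : ℕ} (g : ℝ → ℝ)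
    (w e : EuclideanSpace ℝ (Fin n)) (he : ‖e‖ = 1) :
    ∫ t : EuclideanSpace ℝ (Fin n), g ⟪t, e⟫ * gaussKernel σ (w - t) =
      ∫ s, g s * gauss1 σ (⟪w, e⟫ - s) := by
  obtain ⟨i, -⟩ : ∃ i, e i ≠ 0 := by
    by_contra! h
    simp [show e = 0 from PiLp.ext h] at he
  have horth : Orthonormal ℝ (({i} : Set (Fin n)).domRestrict fun _ => e) :=
    ⟨fun _ => he, fun j k hjk => absurd (Subsingleton.elim j k) hjk⟩
  obtain ⟨b, hb⟩ := horth.exists_orthonormalBasis_extension_of_card_eq (by simp)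
  have hbi : b i = e := hb i rfl
  calc ∫ t : EuclideanSpace ℝ (Fin n), g ⟪t, e⟫ * gaussKernel σ (w - t)
      = ∫ u : EuclideanSpace ℝ (Fin n), g (u i) * gaussKernel σ (b.repr w - u) := by
        rw [← b.measurePreserving_repr_symm.integral_comp
          b.repr.symm.toHomeomorph.measurableEmbedding]
        congr 1 with u
        rw [← gaussKernel_map_linearIsometryEquiv σ b.repr, map_sub, b.repr.apply_symm_apply,
          ← hbi, real_inner_comm, ← b.repr_apply_apply, b.repr.apply_symm_apply]
    _ = ∫ s, g s * gauss1 σ (⟪w, e⟫ - s) := by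
      rw [integral_comp_apply_mul_gaussKernel hσ, b.repr_apply_apply, hbi, real_inner_comm]

lemma integral_comp_mul_mul_gauss1_sub {r : ℝ} (hr : 0 < r) (σ a : ℝ) (f : ℝ → ℝ) :
    ∫ s, f (r * s) * gauss1 σ (a - s) = ∫ y, f y * gauss1 (σ * r) (r * a - y) := by
  have hscale := Measure.integral_comp_mul_left (fun y => f y * gauss1 (σ * r) (r * a - y)) r
  simp only [← mul_sub, gauss1_mul_mul σ _ hr.ne', mul_left_comm (f _), integral_const_mul,
    abs_inv, abs_of_pos hr, smul_eq_mul] at hscale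
  exact mul_left_cancel₀ (inv_ne_zero hr.ne') hscale

theorem gaussian_smoothing_linear_argument_general (σ : ℝ) (hσ : 0 < σ) (n : ℕ)
    (f : ℝ → ℝ) (x w : EuclideanSpace ℝ (Fin n)) (hx : x ≠ 0) :
    (∫ t : EuclideanSpace ℝ (Fin n), f ⟪t, x⟫ * gaussKernel σ (w - t)) =
      ∫ y : ℝ, f y * gauss1 (σ * ‖x‖) (⟪w, x⟫ - y) := by
  have hx_pos : 0 < ‖x‖ := norm_pos_iff.mpr hx
  have hinner (v : EuclideanSpace ℝ (Fin n)) : ⟪v, x⟫ = ‖x‖ * ⟪v, ‖x‖⁻¹ • x⟫ := by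
    rw [real_inner_smul_right, mul_inv_cancel_left₀ hx_pos.ne']
  simp only [hinner]
  rw [integral_comp_inner_mul_gaussKernel hσ (fun s => f (‖x‖ * s)) w (‖x‖⁻¹ • x)
      (norm_smul_inv_norm (𝕜 := ℝ) hx),
    integral_comp_mul_mul_gauss1_sub hx_pos]

theorem gaussian_smoothing_linear_argument (σ : ℝ) (hσ : 0 < σ) (n : ℕ) (hn : 1 ≤ n)
    (f : ℝ → ℝ) (hf : Measurable f) (x w : EuclideanSpace ℝ (Fin n)) (hx : x ≠ 0)
    (hint : Integrable (fun t : EuclideanSpace ℝ (Fin n) => f ⟪t, x⟫ * gaussKernel σ (w - t))) :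
    (∫ t : EuclideanSpace ℝ (Fin n), f ⟪t, x⟫ * gaussKernel σ (w - t)) =
      ∫ y : ℝ, f y * gauss1 (σ * ‖x‖) (⟪w, x⟫ - y) :=
  gaussian_smoothing_linear_argument_general σ hσ n f x w hx
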